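/- Let K be a field of characteristic zero and α₁, …, α_s ∈ K distinct. (1) For every n = (n₁, …, n_s) ∈ ℕ^s one has a_n = (f_n(α₁), …, f_n(α_s)) + Σ_{j=1}^s n_j·a_{n−e_j}, where a term n_j·a_{n−e_j} is interpreted as 0 whenever n_j = 0. (2) For every n ∈ ℕ^s and k, ℓ ∈ {1, …, s} with n_k ≥ 1 one has a_{n+e_ℓ−e_k} = a_n + (α_k − α_ℓ)·a_{n−e_k}. -/

import Mathlib

/-!
Write `D` for differentiation. On polynomials of degree `< N` the operator `Σ_{k<N} D^k` does not
depend on `N`; call it `S`. Then `S` is linear, `P_m = S f_m`, and `S p = p + S (D p)`. Both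
recurrences are therefore images under `S` of identities between the `f_m`: the Leibniz rule
`D f_n = Σⱼ nⱼ f_{n−eⱼ}`, and `f_{n+e_ℓ−e_k} = (z − α_ℓ) f_{n−e_k} = f_n + (α_k − α_ℓ) f_{n−e_k}`.
-/

open Polynomial

/-- `f_m(z) = ∏ᵢ (z − αᵢ)^{mᵢ}`. -/
noncomputable def fpoly {K : Type*} [Field K] {s : ℕ} (α : Fin s → K) (m : Fin s → ℕ) :
    K[X] := ∏ i, (X - C (α i)) ^ m i

/-- `P_m(z) = Σ_{k=0}^{M} f_m^{(k)}(z)`, the sum of `f_m` and all its derivatives. -/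
noncomputable def Ppoly {K : Type*} [Field K] {s : ℕ} (α : Fin s → K) (m : Fin s → ℕ) :
    K[X] := ∑ k ∈ Finset.range (∑ i, m i + 1), derivative^[k] (fpoly α m)

/-- The Hermite approximation `a_m = (P_m(α₁), …, P_m(α_s))`. -/
noncomputable def aH {K : Type*} [Field K] {s : ℕ} (α : Fin s → K) (m : Fin s → ℕ) :
    Fin s → K := fun i => (Ppoly α m).eval (α i)

open Finset

namespace Polynomial

variable {R : Type*} [Semiring R]

noncomputable def derivSum (p : R[X]) : R[X] :=
  ∑ k ∈ range (p.natDegree + 1), derivative^[k] p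

theorem sum_range_iterate_derivative_eq_derivSum {p : R[X]} {N : ℕ} (h : p.natDegree < N) :
    ∑ k ∈ range N, derivative^[k] p = derivSum p := by
  refine (sum_subset (range_subset_range.2 h) fun k _ hk => ?_).symm
  exact iterate_derivative_eq_zero (by simpa using hk)

theorem derivSum_add (p q : R[X]) : derivSum (p + q) = derivSum p + derivSum q := by
  set N := max (p + q).natDegree (max p.natDegree q.natDegree) + 1
  rw [← sum_range_iterate_derivative_eq_derivSum (N := N) (by omega),
    ← sum_range_iterate_derivative_eq_derivSum (p := p) (N := N) (by omega),
    ← sum_range_iterate_derivative_eq_derivSum (p := q) (N := N) (by omega), ← sum_add_distrib]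
  exact sum_congr rfl fun k _ => iterate_map_add derivative k p q

theorem derivSum_smul (a : R) (p : R[X]) : derivSum (a • p) = a • derivSum p := by
  rw [← sum_range_iterate_derivative_eq_derivSum (N := p.natDegree + 1)
    (Nat.lt_succ_of_le (natDegree_smul_le a p)), derivSum, smul_sum]
  exact sum_congr rfl fun k _ => iterate_derivative_smul a p k

noncomputable def derivSumₗ : R[X] →ₗ[R] R[X] where
  toFun := derivSum
  map_add' := derivSum_add
  map_smul' := derivSum_smul

theorem derivSum_C_mul (a : R) (p : R[X]) : derivSum (C a * p) = C a * derivSum p := by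
  simp only [← smul_eq_C_mul, derivSum_smul]

theorem derivSum_sum {ι : Type*} (t : Finset ι) (f : ι → R[X]) :
    derivSum (∑ i ∈ t, f i) = ∑ i ∈ t, derivSum (f i) :=
  map_sum derivSumₗ f t

theorem derivSum_eq_add_derivSum_derivative (p : R[X]) :
    derivSum p = p + derivSum (derivative p) := by
  have hdeg : (derivative p).natDegree < p.natDegree + 1 :=
    (natDegree_derivative_le p).trans_lt (by omega)
  rw [← sum_range_iterate_derivative_eq_derivSum (N := p.natDegree + 2) (by omega),
    ← sum_range_iterate_derivative_eq_derivSum hdeg, sum_range_succ', add_comm]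
  simp only [Function.iterate_succ_apply, Function.iterate_zero_apply]

end Polynomial

section

variable {K : Type*} [Field K] {s : ℕ}

theorem natDegree_fpoly (α : Fin s → K) (m : Fin s → ℕ) : (fpoly α m).natDegree = ∑ i, m i := by
  rw [fpoly, natDegree_prod_of_monic _ _ fun i _ => (monic_X_sub_C (α i)).pow (m i)]
  simp

theorem Ppoly_eq_derivSum (α : Fin s → K) (m : Fin s → ℕ) : Ppoly α m = derivSum (fpoly α m) := by
  rw [Ppoly, ← natDegree_fpoly α m, sum_range_iterate_derivative_eq_derivSum (Nat.lt_succ_self _)]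

theorem fpoly_eq_mul_prod_erase (α : Fin s → K) (m : Fin s → ℕ) (j : Fin s) :
    fpoly α m = (X - C (α j)) ^ m j * ∏ t ∈ univ.erase j, (X - C (α t)) ^ m t :=
  (mul_prod_erase _ _ (mem_univ j)).symm

theorem fpoly_add_single (α : Fin s → K) (m : Fin s → ℕ) (j : Fin s) :
    fpoly α (fun t => m t + if t = j then 1 else 0) = (X - C (α j)) * fpoly α m := by
  rw [fpoly_eq_mul_prod_erase _ _ j, fpoly_eq_mul_prod_erase α m j,
    prod_congr rfl fun t ht => by rw [if_neg (ne_of_mem_erase ht), add_zero], if_pos rfl,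
    pow_succ', mul_assoc]

theorem derivative_fpoly (α : Fin s → K) (n : Fin s → ℕ) :
    derivative (fpoly α n) =
      ∑ j, C (n j : K) * fpoly α (fun t => n t - if t = j then 1 else 0) := by
  rw [fpoly, derivative_prod_finset]
  refine sum_congr rfl fun j _ => ?_
  rw [derivative_X_sub_C_pow, fpoly_eq_mul_prod_erase _ _ j,
    prod_congr (f := fun t => (X - C (α t)) ^ (n t - if t = j then 1 else 0)) rfl
      fun t ht => by rw [if_neg (ne_of_mem_erase ht), Nat.sub_zero], if_pos rfl]
  ring

theorem Ppoly_eq_fpoly_add_sum (α : Fin s → K) (n : Fin s → ℕ) :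
    Ppoly α n = fpoly α n +
      ∑ j, C (n j : K) * Ppoly α (fun t => n t - if t = j then 1 else 0) := by
  simp only [Ppoly_eq_derivSum]
  rw [derivSum_eq_add_derivSum_derivative, derivative_fpoly, derivSum_sum]
  simp only [derivSum_C_mul]

theorem fpoly_add_single_sub_single (α : Fin s → K) {n : Fin s → ℕ} {k : Fin s} (ℓ : Fin s)
    (hk : 1 ≤ n k) :
    fpoly α (fun t => n t + (if t = ℓ then 1 else 0) - if t = k then 1 else 0) =
      fpoly α n + C (α k - α ℓ) * fpoly α (fun t => n t - if t = k then 1 else 0) := by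
  set m : Fin s → ℕ := fun t => n t - if t = k then 1 else 0
  have hn : n = fun t => m t + if t = k then 1 else 0 := by
    funext t; by_cases h : t = k <;> simp [m, h]; omega
  have hnℓ : (fun t => n t + (if t = ℓ then 1 else 0) - if t = k then 1 else 0) =
      fun t => m t + if t = ℓ then 1 else 0 := by
    funext t; by_cases h : t = k <;> simp [m, h]; omega
  rw [hnℓ, hn, fpoly_add_single, fpoly_add_single, C_sub]
  ring

theorem Ppoly_add_single_sub_single (α : Fin s → K) {n : Fin s → ℕ} {k : Fin s} (ℓ : Fin s)
    (hk : 1 ≤ n k) :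
    Ppoly α (fun t => n t + (if t = ℓ then 1 else 0) - if t = k then 1 else 0) =
      Ppoly α n + C (α k - α ℓ) * Ppoly α (fun t => n t - if t = k then 1 else 0) := by
  simp only [Ppoly_eq_derivSum]
  rw [fpoly_add_single_sub_single α ℓ hk, derivSum_add, derivSum_C_mul]

end

theorem stmt16_general {K : Type*} [Field K] {s : ℕ} (α : Fin s → K) :
    (∀ n : Fin s → ℕ, ∀ i : Fin s,
      aH α n i = (fpoly α n).eval (α i) +
        ∑ j, (n j : K) * aH α (fun k => n k - if k = j then 1 else 0) i) ∧
    (∀ n : Fin s → ℕ, ∀ k ℓ : Fin s, 1 ≤ n k → ∀ i : Fin s,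
      aH α (fun t => n t + (if t = ℓ then 1 else 0) - if t = k then 1 else 0) i =
        aH α n i + (α k - α ℓ) * aH α (fun t => n t - if t = k then 1 else 0) i) := by
  refine ⟨fun n i => ?_, fun n k ℓ hk i => ?_⟩
  · simp [aH, Ppoly_eq_fpoly_add_sum α n, eval_finsetSum]
  · simp [aH, Ppoly_add_single_sub_single α ℓ hk]

/-- **recurrence relations.**
(1) `a_n = (f_n(α₁),…,f_n(α_s)) + Σⱼ nⱼ a_{n−eⱼ}` (the `j`-th term vanishing when
`nⱼ = 0`);
(2) if `n_k ≥ 1` then `a_{n+e_ℓ−e_k} = a_n + (α_k − α_ℓ) a_{n−e_k}`. -/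
theorem stmt16 {K : Type*} [Field K] [CharZero K] {s : ℕ} (α : Fin s → K)
    (hα : Function.Injective α) :
    (∀ n : Fin s → ℕ, ∀ i : Fin s,
      aH α n i = (fpoly α n).eval (α i) +
        ∑ j, (n j : K) * aH α (fun k => n k - if k = j then 1 else 0) i) ∧
    (∀ n : Fin s → ℕ, ∀ k ℓ : Fin s, 1 ≤ n k → ∀ i : Fin s,
      aH α (fun t => n t + (if t = ℓ then 1 else 0) - if t = k then 1 else 0) i =
        aH α n i + (α k - α ℓ) * aH α (fun t => n t - if t = k then 1 else 0) i) :=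
  stmt16_general α
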